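/- arXiv:2406.05399 — 3 statements merged into one kernel-verified Lean document; each statement's English description precedes it below -/
import Mathlib

section
/- For integers N ≥ 1 and the cyclic distance D(l₁,l₂) := min{|l₁−l₂|, N−|l₁−l₂|} on {0,1,…,N−1}, and for a triple (l₁,l₂,l₃) define D(l₁,l₂,l₃) := max over i of min over j≠i of D(lᵢ,l_j). Then for every r ≥ 0, the number of triples (l₁,l₂,l₃) ∈ {0,…,N−1}³ with D(l₁,l₂,l₃) = r is at most C·N·(r+1) for some absolute constant C. -/
/-!
`D3 N l₁ l₂ l₃` is the median of the three pairwise distances, i.e. the larger of the two smallest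
ones. Hence some index `i` has both other indices within distance `r` of `lᵢ`, one of them at
distance exactly `r`. Given `lᵢ`, a point at distance exactly `r` has at most two positions and a
point within distance `r` at most `2 (r + 1)`, so there are at most `3 · N · 2 · 2 · 2 (r + 1)`
such triples.
-/

/-- Cyclic distance on `{0,…,N−1}`. -/
def Dpair (N l₁ l₂ : ℕ) : ℕ :=
  min (max l₁ l₂ - min l₁ l₂) (N - (max l₁ l₂ - min l₁ l₂))

/-- Max-min distance for a triple. -/
def D3 (N l₁ l₂ l₃ : ℕ) : ℕ :=
  max (max (min (Dpair N l₁ l₂) (Dpair N l₁ l₃))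
           (min (Dpair N l₂ l₁) (Dpair N l₂ l₃)))
      (min (Dpair N l₃ l₁) (Dpair N l₃ l₂))

open Finset

lemma Dpair_comm (N x y : ℕ) : Dpair N x y = Dpair N y x := by
  unfold Dpair; omega

lemma card_filter_Dpair_eq_le_two {N x : ℕ} (hx : x < N) (r : ℕ) :
    #{y ∈ range N | Dpair N x y = r} ≤ 2 := by
  by_contra! h
  obtain ⟨y₁, h₁, y₂, h₂, y₃, h₃, h₁₂, h₁₃, h₂₃⟩ := two_lt_card.mp h
  simp only [mem_filter, mem_range] at h₁ h₂ h₃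
  unfold Dpair at h₁ h₂ h₃
  omega

lemma card_filter_Dpair_le_le {N x : ℕ} (hx : x < N) (r : ℕ) :
    #{y ∈ range N | Dpair N x y ≤ r} ≤ 2 * (r + 1) := by
  calc #{y ∈ range N | Dpair N x y ≤ r}
      ≤ 2 * #(range (r + 1)) :=
        card_le_mul_card_image_of_maps_to (f := Dpair N x)
          (fun y hy => by simp only [mem_filter, mem_range] at hy ⊢; omega) 2
          (fun d _ => (card_le_card fun y => by simp only [mem_filter]; tauto).trans
            (card_filter_Dpair_eq_le_two hx d))
    _ = 2 * (r + 1) := by rw [card_range]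

lemma card_filter_max_eq_le {α : Type*} [DecidableEq α] (s : Finset α) (f : α → ℕ) (r : ℕ) :
    #{p ∈ s ×ˢ s | max (f p.1) (f p.2) = r} ≤
      2 * (#{a ∈ s | f a = r} * #{a ∈ s | f a ≤ r}) := by
  have hcover : {p ∈ s ×ˢ s | max (f p.1) (f p.2) = r} ⊆
      {a ∈ s | f a = r} ×ˢ {a ∈ s | f a ≤ r} ∪ {a ∈ s | f a ≤ r} ×ˢ {a ∈ s | f a = r} := by
    intro p
    simp only [mem_filter, mem_product, mem_union]
    rintro ⟨⟨h₁, h₂⟩, h⟩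
    rcases le_total (f p.1) (f p.2) with hle | hle
    · exact Or.inr ⟨⟨h₁, by omega⟩, h₂, by omega⟩
    · exact Or.inl ⟨⟨h₁, by omega⟩, h₂, by omega⟩
  calc _ ≤ _ := card_le_card hcover
    _ ≤ _ := card_union_le _ _
    _ = _ := by rw [card_product, card_product]; ring

lemma card_filter_max_Dpair_eq_le (N r : ℕ) :
    #{p ∈ range N ×ˢ range N ×ˢ range N | max (Dpair N p.1 p.2.1) (Dpair N p.1 p.2.2) = r}
      ≤ 8 * (r + 1) * N := by
  refine (card_le_mul_card_image_of_maps_to (f := Prod.fst) (t := range N)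
    (fun p hp => by simp only [mem_filter, mem_product] at hp; exact hp.1.1) _
    fun a ha => ?_).trans_eq (by rw [card_range])
  have ha : a < N := mem_range.mp ha
  have hfiber : {p ∈ range N ×ˢ range N ×ˢ range N |
        max (Dpair N p.1 p.2.1) (Dpair N p.1 p.2.2) = r ∧ p.1 = a} ⊆
      {a} ×ˢ {q ∈ range N ×ˢ range N | max (Dpair N a q.1) (Dpair N a q.2) = r} := by
    rintro ⟨x, q⟩
    simp only [mem_filter, mem_product, mem_singleton]
    rintro ⟨⟨-, hq⟩, h, rfl⟩
    exact ⟨rfl, hq, h⟩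
  calc _ ≤ _ := card_le_card (by simpa only [filter_filter] using hfiber)
    _ ≤ 2 * (2 * (2 * (r + 1))) := by
      rw [card_product, card_singleton, one_mul]
      refine (card_filter_max_eq_le _ (Dpair N a) r).trans ?_
      gcongr
      · exact card_filter_Dpair_eq_le_two ha r
      · exact card_filter_Dpair_le_le ha r
    _ = 8 * (r + 1) := by ring

lemma max_Dpair_eq_of_D3_eq {N a b c r : ℕ} (h : D3 N a b c = r) :
    max (Dpair N a b) (Dpair N a c) = r ∨ max (Dpair N b a) (Dpair N b c) = r ∨
      max (Dpair N c a) (Dpair N c b) = r := by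
  unfold D3 at h
  rw [Dpair_comm N b a, Dpair_comm N c a, Dpair_comm N c b] at h ⊢
  omega

theorem stmt0 :
    ∃ C : ℝ, 0 < C ∧ ∀ N : ℕ, 1 ≤ N → ∀ r : ℕ,
      (((Finset.range N ×ˢ Finset.range N ×ˢ Finset.range N).filter
        (fun l => D3 N l.1 l.2.1 l.2.2 = r)).card : ℝ) ≤ C * N * (r + 1) := by
  refine ⟨24, by norm_num, fun N _ r => ?_⟩
  set cube := range N ×ˢ range N ×ˢ range N
  set centered := {p ∈ cube | max (Dpair N p.1 p.2.1) (Dpair N p.1 p.2.2) = r}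
  have hcover : {l ∈ cube | D3 N l.1 l.2.1 l.2.2 = r} ⊆ centered ∪
      centered.image (fun p => (p.2.1, p.1, p.2.2)) ∪
      centered.image (fun p => (p.2.1, p.2.2, p.1)) := by
    rintro ⟨a, b, c⟩ hl
    simp only [cube, centered, mem_filter, mem_product, mem_range, mem_union, mem_image,
      Prod.exists, Prod.mk.injEq] at hl ⊢
    obtain ⟨⟨ha, hb, hc⟩, hD⟩ := hl
    rcases max_Dpair_eq_of_D3_eq hD with h | h | h
    · exact Or.inl (Or.inl ⟨⟨ha, hb, hc⟩, h⟩)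
    · exact Or.inl (Or.inr ⟨b, a, c, ⟨⟨hb, ha, hc⟩, h⟩, rfl, rfl, rfl⟩)
    · exact Or.inr ⟨c, a, b, ⟨⟨hc, ha, hb⟩, h⟩, rfl, rfl, rfl⟩
  have hcard : #{l ∈ cube | D3 N l.1 l.2.1 l.2.2 = r} ≤ 24 * N * (r + 1) :=
    calc _ ≤ #centered + #centered + #centered :=
          (card_le_card hcover).trans <| (card_union_le _ _).trans <|
            add_le_add ((card_union_le _ _).trans (add_le_add le_rfl card_image_le)) card_image_le
      _ ≤ 24 * N * (r + 1) := by
        have hcentered : #centered ≤ 8 * (r + 1) * N := card_filter_max_Dpair_eq_le N r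
        linarith
  exact_mod_cast hcard
end

section
/- Let G be a Hermitian operator and ρ a density matrix commuting with G on a finite-dimensional Hilbert space, with tr(ρG) = 0. Suppose G = Σ_{l=0}^{N−1} G_l with each tr(ρG_l) = 0, and suppose there are constants K, ξ > 0 such that |tr(ρ G_{l₁} G_{l₂} G_{l₃})| ≤ K·e^{−D(l₁,l₂,l₃)/ξ} for all l₁,l₂,l₃, where D is the cyclic max-min distance. Then |tr(ρG³)| ≤ C·N for a constant C depending only on K and ξ. -/
/-!
Expanding `G³ = (∑ G_l)³` turns `tr(ρG³)` into a triple sum of three-point correlators.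
Two of the three pairs among `l₁, l₂, l₃` lie within `D` of each other and the third within
`2D`, so `e^{-D/ξ} ≤ r^{d(l₁,l₂)} r^{d(l₁,l₃)}` with `r = e^{-1/(3ξ)}`. For fixed `l₁` the sums
over `l₂` and `l₃` are then geometric series bounded by `4/(1-r)` (a cyclic distance is
attained by at most four sites), which leaves a factor `N` from the sum over `l₁`.
-/

open Matrix ComplexOrder

open Finset

section CyclicDistance

variable {N a b c : ℕ}

lemma Dpair_comm_s6 (N a b : ℕ) : Dpair N a b = Dpair N b a := by
  unfold Dpair; omega

lemma Dpair_le_add (ha : a < N) (hb : b < N) (hc : c < N) :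
    Dpair N a b ≤ Dpair N a c + Dpair N c b := by
  unfold Dpair; omega

lemma Dpair_le (N a b : ℕ) : Dpair N a b ≤ N := by
  unfold Dpair; omega

/-- Every point has a neighbour within `D3`, so two of the three pairs are within `D3`
and the third within `2 * D3` by the triangle inequality. -/
lemma Dpair_add_Dpair_le_three_mul_D3 (ha : a < N) (hb : b < N) (hc : c < N) :
    Dpair N a b + Dpair N a c ≤ 3 * D3 N a b c := by
  have := Dpair_le_add ha hb hc
  have := Dpair_le_add ha hc hb
  have := Dpair_le_add hb hc ha
  have := Dpair_comm_s6 N a b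
  have := Dpair_comm_s6 N a c
  have := Dpair_comm_s6 N b c
  unfold D3
  omega

lemma card_filter_Dpair_eq_le (hc : c < N) (d : ℕ) :
    #{l ∈ range N | Dpair N c l = d} ≤ 4 := by
  refine (card_le_card (t := {c + d, c - d, c + d - N, c + N - d}) fun l hl => ?_).trans
    card_le_four
  simp only [mem_filter, mem_range] at hl
  unfold Dpair at hl
  simp only [mem_insert, mem_singleton]
  omega

lemma sum_pow_Dpair_le {r : ℝ} (hr₀ : 0 ≤ r) (hr₁ : r < 1) (hc : c < N) :
    ∑ l ∈ range N, r ^ Dpair N c l ≤ 4 / (1 - r) := by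
  have hmaps : ∀ l ∈ range N, Dpair N c l ∈ range (N + 1) := fun l _ =>
    mem_range.2 (Nat.lt_succ_of_le (Dpair_le N c l))
  calc ∑ l ∈ range N, r ^ Dpair N c l
      = ∑ d ∈ range (N + 1), #{l ∈ range N | Dpair N c l = d} * r ^ d := by
        rw [← sum_fiberwise_of_maps_to hmaps]
        refine sum_congr rfl fun d _ => ?_
        rw [sum_congr rfl fun l hl => by rw [(mem_filter.1 hl).2], sum_const, nsmul_eq_mul]
    _ ≤ ∑ d ∈ range (N + 1), 4 * r ^ d := by
        gcongr with d
        exact_mod_cast card_filter_Dpair_eq_le hc d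
    _ ≤ 4 / (1 - r) := by
        rw [← mul_sum, range_eq_Ico, ← mul_one_div]
        gcongr
        simpa using geom_sum_Ico_le_of_lt_one hr₀ hr₁ (m := 0) (n := N + 1)

lemma exp_neg_D3_div_le (ha : a < N) (hb : b < N) (hc : c < N) {ξ : ℝ} (hξ : 0 < ξ) :
    Real.exp (-(D3 N a b c : ℝ) / ξ)
      ≤ Real.exp (-(3 * ξ)⁻¹) ^ Dpair N a b * Real.exp (-(3 * ξ)⁻¹) ^ Dpair N a c := by
  rw [← Real.exp_nat_mul, ← Real.exp_nat_mul, ← Real.exp_add, Real.exp_le_exp]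
  have : (Dpair N a b + Dpair N a c : ℝ) ≤ 3 * D3 N a b c := by
    exact_mod_cast Dpair_add_Dpair_le_three_mul_D3 ha hb hc
  rw [show (Dpair N a b : ℝ) * -(3 * ξ)⁻¹ + Dpair N a c * -(3 * ξ)⁻¹
      = -((Dpair N a b + Dpair N a c) / (3 * ξ)) by ring,
    neg_div, neg_le_neg_iff, div_le_div_iff₀ (by positivity) hξ]
  nlinarith

end CyclicDistance

lemma trace_mul_sum_pow_three {ι n R : Type*} [Fintype n] [DecidableEq n] [Semiring R]
    (ρ : Matrix n n R) (s : Finset ι) (A : ι → Matrix n n R) :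
    trace (ρ * (∑ i ∈ s, A i) ^ 3)
      = ∑ a ∈ s, ∑ b ∈ s, ∑ c ∈ s, trace (ρ * (A a * A b * A c)) := by
  rw [pow_three', sum_mul_sum, sum_mul_sum]
  simp only [sum_mul, mul_sum, trace_sum]
  exact sum_congr rfl fun _ _ => sum_comm

lemma norm_sum_sum_sum_le {ι E : Type*} [SeminormedAddCommGroup E] (s : Finset ι)
    (f : ι → ι → ι → E) (g : ι → ι → ℝ) {K S : ℝ} (hK : 0 ≤ K)
    (hg : ∀ a ∈ s, ∀ b ∈ s, 0 ≤ g a b) (hS : ∀ a ∈ s, ∑ b ∈ s, g a b ≤ S)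
    (hf : ∀ a ∈ s, ∀ b ∈ s, ∀ c ∈ s, ‖f a b c‖ ≤ K * (g a b * g a c)) :
    ‖∑ a ∈ s, ∑ b ∈ s, ∑ c ∈ s, f a b c‖ ≤ K * S ^ 2 * #s := by
  calc ‖∑ a ∈ s, ∑ b ∈ s, ∑ c ∈ s, f a b c‖
      ≤ ∑ a ∈ s, ∑ b ∈ s, ∑ c ∈ s, K * (g a b * g a c) := by
        refine (norm_sum_le _ _).trans (sum_le_sum fun a ha => ?_)
        refine (norm_sum_le _ _).trans (sum_le_sum fun b hb => ?_)
        exact (norm_sum_le _ _).trans (sum_le_sum fun c hc => hf a ha b hb c hc)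
    _ = ∑ a ∈ s, K * (∑ b ∈ s, g a b) ^ 2 := by
        refine sum_congr rfl fun a _ => ?_
        rw [sq, sum_mul_sum, mul_sum]
        simp only [mul_sum]
    _ ≤ ∑ _a ∈ s, K * S ^ 2 := by
        gcongr with a ha
        · exact sum_nonneg (hg a ha)
        · exact hS a ha
    _ = K * S ^ 2 * #s := by rw [sum_const, nsmul_eq_mul, mul_comm]

theorem stmt6 (K ξ : ℝ) (hK : 0 ≤ K) (hξ : 0 < ξ) :
    ∃ C : ℝ, 0 ≤ C ∧
      ∀ (N : ℕ) (n : Type) (_ : Fintype n) (_ : DecidableEq n)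
        (ρ G : Matrix n n ℂ) (Gl : ℕ → Matrix n n ℂ),
        1 ≤ N →
        ρ.PosSemidef → ρ.trace = 1 → G.IsHermitian → Commute ρ G →
        G = ∑ l ∈ Finset.range N, Gl l →
        (∀ l ∈ Finset.range N, (ρ * Gl l).trace = 0) →
        (∀ l₁ ∈ Finset.range N, ∀ l₂ ∈ Finset.range N, ∀ l₃ ∈ Finset.range N,
          ‖(ρ * (Gl l₁ * Gl l₂ * Gl l₃)).trace‖
            ≤ K * Real.exp (-(D3 N l₁ l₂ l₃ : ℝ) / ξ)) →
        ‖(ρ * G ^ 3).trace‖ ≤ C * N := by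
  set r := Real.exp (-(3 * ξ)⁻¹)
  have hr₁ : r < 1 := Real.exp_lt_one_iff.2 (by simpa using hξ)
  refine ⟨K * (4 / (1 - r)) ^ 2, by have := sub_pos.2 hr₁; positivity, ?_⟩
  intro N n _ _ ρ G Gl _ _ _ _ _ hG _ hcorr
  rw [hG, trace_mul_sum_pow_three]
  simpa using norm_sum_sum_sum_le (range N) _ (fun a b => r ^ Dpair N a b) hK
    (fun _ _ _ _ => by positivity)
    (fun a ha => sum_pow_Dpair_le (Real.exp_pos _).le hr₁ (mem_range.1 ha))
    fun a ha b hb c hc => (hcorr a ha b hb c hc).trans <| mul_le_mul_of_nonneg_left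
      (exp_neg_D3_div_le (mem_range.1 ha) (mem_range.1 hb) (mem_range.1 hc) hξ) hK
end

section
/- Let |ψ⟩ be a unit vector in a tensor product of N finite-dimensional spaces, and let G = Σ_{l=0}^{N−1} G'_l where G'_l acts on sites l+1,…,l+k (cyclically) with ⟨ψ|G'_l|ψ⟩ = 0 and ‖G'_l‖ ≤ 1. Assume exponential decay of correlations: |⟨ψ|A₁A₂|ψ⟩ − ⟨ψ|A₁|ψ⟩⟨ψ|A₂|ψ⟩| ≤ ‖A₁‖‖A₂‖·K·e^{−dist(A₁,A₂)/ξ} for all operators A₁, A₂ with disjoint supports. Then ⟨ψ|G²|ψ⟩ ≤ C·N for a constant C depending only on K, ξ, k. -/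
/-!
Expanding `G² = ∑ G l₁ G l₂`, each of the `N²` terms has real part at most `f (Dpair N l₁ l₂)`,
where `f d = 1` for overlapping supports (`‖G l‖ ≤ 1`) and `f d = K e^{-(d-(k-1))/ξ}` otherwise
(the one-point functions vanish). Every `l₁` has at most four partners `l₂` at a given cyclic
distance, so each row sums to at most `4 ∑' d, f d`, which is finite because `f` is dominated by
a geometric sequence; hence `C = 4 ∑' d, f d`.
-/

open scoped InnerProductSpace

open Finset

noncomputable def correlationBound (K ξ : ℝ) (k d : ℕ) : ℝ :=
  if k - 1 < d then K * Real.exp (-((d - (k - 1) : ℕ) : ℝ) / ξ) else 1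

section correlationBound

variable {K ξ : ℝ} {k : ℕ}

lemma correlationBound_nonneg (hK : 0 ≤ K) (d : ℕ) : 0 ≤ correlationBound K ξ k d := by
  unfold correlationBound
  split_ifs <;> positivity

lemma correlationBound_le_geometric (hξ : 0 ≤ ξ) (d : ℕ) :
    correlationBound K ξ k d ≤
      max 1 K * Real.exp ((k - 1 : ℕ) / ξ) * Real.exp (-1 / ξ) ^ d := by
  have hshift : Real.exp ((k - 1 : ℕ) / ξ) * Real.exp (-1 / ξ) ^ d
      = Real.exp (((k - 1 : ℕ) - d : ℝ) / ξ) := by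
    rw [← Real.exp_nat_mul, ← Real.exp_add]
    ring_nf
  rw [mul_assoc, hshift]
  unfold correlationBound
  split_ifs with hd
  · rw [Nat.cast_sub hd.le, neg_sub]
    gcongr
    exact le_max_right 1 K
  · have hdk : (d : ℝ) ≤ (k - 1 : ℕ) := by exact_mod_cast not_lt.mp hd
    exact one_le_mul_of_one_le_of_one_le (le_max_left 1 K)
      (Real.one_le_exp (div_nonneg (by linarith) hξ))

lemma summable_correlationBound (hK : 0 ≤ K) (hξ : 0 < ξ) :
    Summable (correlationBound K ξ k) :=
  Summable.of_nonneg_of_le (correlationBound_nonneg hK) (correlationBound_le_geometric hξ.le)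
    ((summable_geometric_of_lt_one (Real.exp_pos _).le
      (Real.exp_lt_one_iff.mpr (div_neg_of_neg_of_pos neg_one_lt_zero hξ))).mul_left _)

end correlationBound

lemma card_filter_Dpair_eq_le_four {N l₁ : ℕ} (hl₁ : l₁ < N) (d : ℕ) :
    #{l₂ ∈ range N | Dpair N l₁ l₂ = d} ≤ 4 := by
  have hsub : {l₂ ∈ range N | Dpair N l₁ l₂ = d} ⊆
      {l₁ + d, l₁ - d, l₁ + (N - d), l₁ - (N - d)} := by
    intro l₂ hl₂
    obtain ⟨hl₂N, rfl⟩ := mem_filter.mp hl₂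
    simp only [mem_range] at hl₂N
    simp only [Dpair, mem_insert, mem_singleton]
    omega
  exact (card_le_card hsub).trans card_le_four

lemma sum_range_comp_Dpair_le_tsum {N l₁ : ℕ} (hl₁ : l₁ < N) {f : ℕ → ℝ} (hf : ∀ d, 0 ≤ f d)
    (hfs : Summable f) : ∑ l₂ ∈ range N, f (Dpair N l₁ l₂) ≤ 4 * ∑' d, f d := by
  have hmaps : ∀ l₂ ∈ range N, Dpair N l₁ l₂ ∈ range N := by
    intro l₂ hl₂
    simp only [mem_range, Dpair] at hl₂ ⊢
    omega
  rw [← sum_fiberwise_of_maps_to hmaps]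
  calc ∑ d ∈ range N, ∑ l₂ ∈ range N with Dpair N l₁ l₂ = d, f (Dpair N l₁ l₂)
      = ∑ d ∈ range N, #{l₂ ∈ range N | Dpair N l₁ l₂ = d} * f d := by
        refine sum_congr rfl fun d _ => ?_
        rw [sum_congr rfl fun l₂ hl₂ => by rw [(mem_filter.mp hl₂).2], sum_const, nsmul_eq_mul]
    _ ≤ ∑ d ∈ range N, 4 * f d := by
        gcongr with d
        · exact hf d
        · exact_mod_cast card_filter_Dpair_eq_le_four hl₁ d
    _ ≤ 4 * ∑' d, f d := by
        rw [← mul_sum]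
        gcongr
        exact hfs.sum_le_tsum _ fun d _ => hf d

lemma norm_inner_apply_apply_le {𝕜 E : Type*} [RCLike 𝕜] [NormedAddCommGroup E]
    [InnerProductSpace 𝕜 E] (ψ : E) (A B : E →L[𝕜] E) :
    ‖⟪ψ, A (B ψ)⟫_𝕜‖ ≤ ‖A‖ * ‖B‖ * ‖ψ‖ ^ 2 :=
  calc ‖⟪ψ, A (B ψ)⟫_𝕜‖ ≤ ‖ψ‖ * (‖A‖ * (‖B‖ * ‖ψ‖)) :=
        (norm_inner_le_norm ψ _).trans <| by
          gcongr
          exact (A.le_opNorm _).trans (by gcongr; exact B.le_opNorm ψ)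
    _ = ‖A‖ * ‖B‖ * ‖ψ‖ ^ 2 := by ring

theorem stmt16_general (K ξ : ℝ) (k : ℕ) (hK : 0 ≤ K) (hξ : 0 < ξ) :
    ∃ C : ℝ, 0 ≤ C ∧
      ∀ (N : ℕ) (ι : Type) (_ : Fintype ι) (_ : DecidableEq ι)
        (ψ : EuclideanSpace ℂ ι)
        (G : ℕ → EuclideanSpace ℂ ι →L[ℂ] EuclideanSpace ℂ ι),
        1 ≤ N → ‖ψ‖ = 1 →
        (∀ l ∈ Finset.range N, ‖G l‖ ≤ 1) →
        (∀ l ∈ Finset.range N, ⟪ψ, G l ψ⟫_ℂ = 0) →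
        -- exponential decay of correlations between terms with disjoint supports:
        -- `G l₁` is supported on sites `l₁+1,…,l₁+k` (cyclically), so the supports of
        -- `G l₁` and `G l₂` are disjoint, at cyclic distance `Dpair N l₁ l₂ − (k−1)`,
        -- whenever `k − 1 < Dpair N l₁ l₂`
        (∀ l₁ ∈ Finset.range N, ∀ l₂ ∈ Finset.range N, k - 1 < Dpair N l₁ l₂ →
          ‖⟪ψ, (G l₁) ((G l₂) ψ)⟫_ℂ - ⟪ψ, (G l₁) ψ⟫_ℂ * ⟪ψ, (G l₂) ψ⟫_ℂ‖
            ≤ K * Real.exp (-((Dpair N l₁ l₂ - (k - 1) : ℕ) : ℝ) / ξ)) →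
        (⟪ψ, (∑ l ∈ Finset.range N, G l) ((∑ l ∈ Finset.range N, G l) ψ)⟫_ℂ).re
          ≤ C * N := by
  refine ⟨4 * ∑' d, correlationBound K ξ k d,
    mul_nonneg zero_le_four (tsum_nonneg (correlationBound_nonneg hK)), ?_⟩
  intro N ι _ _ ψ G _ hψ hnorm hzero hdecay
  have hterm : ∀ l₁ ∈ range N, ∀ l₂ ∈ range N,
      (⟪ψ, G l₁ (G l₂ ψ)⟫_ℂ).re ≤ correlationBound K ξ k (Dpair N l₁ l₂) := by
    intro l₁ h₁ l₂ h₂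
    refine (Complex.re_le_norm _).trans ?_
    unfold correlationBound
    split_ifs with hd
    · simpa [hzero l₁ h₁, hzero l₂ h₂] using hdecay l₁ h₁ l₂ h₂ hd
    · refine (norm_inner_apply_apply_le ψ (G l₁) (G l₂)).trans ?_
      rw [hψ, one_pow, mul_one]
      exact mul_le_one₀ (hnorm l₁ h₁) (norm_nonneg _) (hnorm l₂ h₂)
  calc (⟪ψ, (∑ l ∈ range N, G l) ((∑ l ∈ range N, G l) ψ)⟫_ℂ).re
      = ∑ l₁ ∈ range N, ∑ l₂ ∈ range N, (⟪ψ, G l₁ (G l₂ ψ)⟫_ℂ).re := by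
        simp only [_root_.sum_apply, map_sum, inner_sum, Complex.re_sum]
        exact sum_comm
    _ ≤ ∑ l₁ ∈ range N, ∑ l₂ ∈ range N, correlationBound K ξ k (Dpair N l₁ l₂) :=
        sum_le_sum fun l₁ h₁ => sum_le_sum (hterm l₁ h₁)
    _ ≤ ∑ _l₁ ∈ range N, 4 * ∑' d, correlationBound K ξ k d :=
        sum_le_sum fun l₁ h₁ => sum_range_comp_Dpair_le_tsum (mem_range.mp h₁)
          (correlationBound_nonneg hK) (summable_correlationBound hK hξ)
    _ = (4 * ∑' d, correlationBound K ξ k d) * N := by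
        rw [sum_const, card_range, nsmul_eq_mul, mul_comm]

theorem stmt16 (K ξ : ℝ) (k : ℕ) (hK : 0 ≤ K) (hξ : 0 < ξ) (hk : 1 ≤ k) :
    ∃ C : ℝ, 0 ≤ C ∧
      ∀ (N : ℕ) (ι : Type) (_ : Fintype ι) (_ : DecidableEq ι)
        (ψ : EuclideanSpace ℂ ι)
        (G : ℕ → EuclideanSpace ℂ ι →L[ℂ] EuclideanSpace ℂ ι),
        1 ≤ N → ‖ψ‖ = 1 →
        (∀ l ∈ Finset.range N, ‖G l‖ ≤ 1) →
        (∀ l ∈ Finset.range N, ⟪ψ, G l ψ⟫_ℂ = 0) →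
        -- exponential decay of correlations between terms with disjoint supports:
        -- `G l₁` is supported on sites `l₁+1,…,l₁+k` (cyclically), so the supports of
        -- `G l₁` and `G l₂` are disjoint, at cyclic distance `Dpair N l₁ l₂ − (k−1)`,
        -- whenever `k − 1 < Dpair N l₁ l₂`
        (∀ l₁ ∈ Finset.range N, ∀ l₂ ∈ Finset.range N, k - 1 < Dpair N l₁ l₂ →
          ‖⟪ψ, (G l₁) ((G l₂) ψ)⟫_ℂ - ⟪ψ, (G l₁) ψ⟫_ℂ * ⟪ψ, (G l₂) ψ⟫_ℂ‖
            ≤ K * Real.exp (-((Dpair N l₁ l₂ - (k - 1) : ℕ) : ℝ) / ξ)) →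
        (⟪ψ, (∑ l ∈ Finset.range N, G l) ((∑ l ∈ Finset.range N, G l) ψ)⟫_ℂ).re
          ≤ C * N :=
  stmt16_general K ξ k hK hξ
end
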